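/- Let f : ℝ^n → ℝ be continuously differentiable, M ⊆ ℝ^n closed, and K : ℝ^n → Set ℝ^m a set-valued mapping with closed graph; let z̄ ∈ M ∩ dom K be such that K z̄ = {λ̄} is a singleton and K is inner semicompact and inner calm* in the fuzzy sense w.r.t. dom K at z̄. If z̄ is explicitly S-stationary, i.e., −∇f(z̄) ∈ N̂_M(z̄) + {ξ ∈ ℝ^n | (ξ, 0) ∈ N̂_{gph K}(z̄, λ̄)}, then z̄ is implicitly S-stationary: −∇f(z̄) ∈ N̂_M(z̄) + N̂_{dom K}(z̄). -/

import Mathlib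

open Filter Metric Set Bornology
open scoped RealInnerProductSpace Topology Pointwise

noncomputable section

/-- The Bouligand tangent cone to `Ω` at `x`: `w` belongs to it iff there are `t k ↓ 0`
(positive) and `v k → w` with `x + t k • v k ∈ Ω` for all `k`. -/
def bouligandTangentCone {E : Type*} [NormedAddCommGroup E] [NormedSpace ℝ E]
    (Ω : Set E) (x : E) : Set E :=
  {w | ∃ (t : ℕ → ℝ) (v : ℕ → E), (∀ k, 0 < t k) ∧
    Tendsto t atTop (𝓝 0) ∧ Tendsto v atTop (𝓝 w) ∧ ∀ k, x + t k • v k ∈ Ω}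

/-- The regular (Fréchet) normal cone, defined as the polar of the Bouligand tangent cone. -/
def regNormalCone {E : Type*} [NormedAddCommGroup E] [InnerProductSpace ℝ E]
    (Ω : Set E) (x : E) : Set E :=
  {ζ | ∀ w ∈ bouligandTangentCone Ω x, ⟪ζ, w⟫ ≤ 0}

/-- The regular (Fréchet) normal cone for subsets of a product of inner product spaces,
using the natural pairing on the product. -/
def regNormalConeProd {E F : Type*} [NormedAddCommGroup E] [InnerProductSpace ℝ E]
    [NormedAddCommGroup F] [InnerProductSpace ℝ F]
    (Ω : Set (E × F)) (p : E × F) : Set (E × F) :=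
  {ζ | ∀ q ∈ bouligandTangentCone Ω p, ⟪ζ.1, q.1⟫ + ⟪ζ.2, q.2⟫ ≤ 0}

/-- The domain of a set-valued mapping: the points with nonempty image. -/
def svDom {E F : Type*} (K : E → Set F) : Set E := {z | (K z).Nonempty}

/-- The graph of a set-valued mapping. -/
def svGraph {E F : Type*} (K : E → Set F) : Set (E × F) := {p | p.2 ∈ K p.1}

/-- `K` is inner semicompact at `zb` w.r.t. its domain: for every sequence in `dom K`
converging to `zb` there is a selection of images possessing a bounded subsequence. -/
def InnerSemicompactAt {E F : Type*} [TopologicalSpace E] [Bornology F]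
    (K : E → Set F) (zb : E) : Prop :=
  ∀ zs : ℕ → E, (∀ k, zs k ∈ svDom K) → Tendsto zs atTop (𝓝 zb) →
    ∃ ls : ℕ → F, (∀ k, ls k ∈ K (zs k)) ∧
      ∃ φ : ℕ → ℕ, StrictMono φ ∧ IsBounded (Set.range (ls ∘ φ))

/-- `K` is inner calm* in the fuzzy sense at `zb` w.r.t. its domain. -/
def InnerCalmStarFuzzyAt {E F : Type*} [NormedAddCommGroup E] [NormedSpace ℝ E]
    [NormedAddCommGroup F] (K : E → Set F) (zb : E) : Prop :=
  ∀ d ∈ bouligandTangentCone (svDom K) zb, ‖d‖ = 1 →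
    ∃ κ > (0 : ℝ), ∃ lb : F, ∃ (t : ℕ → ℝ) (ds : ℕ → E) (ls : ℕ → F),
      (∀ k, 0 < t k) ∧ Tendsto t atTop (𝓝 0) ∧ Tendsto ds atTop (𝓝 d) ∧
      Tendsto ls atTop (𝓝 lb) ∧
      ∀ k, ls k ∈ K (zb + t k • ds k) ∧ ‖ls k - lb‖ ≤ κ * t k * ‖ds k‖

lemma btc_smul {E : Type*} [NormedAddCommGroup E] [NormedSpace ℝ E]
    {Ω : Set E} {x : E} {w : E} (hw : w ∈ bouligandTangentCone Ω x) {c : ℝ} (hc : 0 < c) :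
    c • w ∈ bouligandTangentCone Ω x := by
  obtain ⟨t, v, ht0, htl, hvl, hmem⟩ := hw
  refine ⟨fun k => c⁻¹ * t k, fun k => c • v k, fun k => mul_pos (inv_pos.mpr hc) (ht0 k), ?_, ?_, fun k => ?_⟩
  · simpa using htl.const_mul c⁻¹
  · exact hvl.const_smul c
  · have : (c⁻¹ * t k) • (c • v k) = t k • v k := by
      rw [smul_smul]
      congr 1
      rw [mul_comm c⁻¹ (t k), mul_assoc, inv_mul_cancel₀ hc.ne', mul_one]
    rw [this]; exact hmem k

/-- If `K zb` is a singleton, `K` is inner semicompact and inner calm* in the fuzzy sense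
at `zb` w.r.t. `dom K`, and `zb` is explicitly S-stationary, then `zb` is implicitly
S-stationary. -/
theorem stmt_11 {n m : ℕ} (f : EuclideanSpace ℝ (Fin n) → ℝ)
    (M : Set (EuclideanSpace ℝ (Fin n)))
    (K : EuclideanSpace ℝ (Fin n) → Set (EuclideanSpace ℝ (Fin m)))
    (zb : EuclideanSpace ℝ (Fin n)) (lamb : EuclideanSpace ℝ (Fin m))
    (hf : ContDiff ℝ 1 f)
    (hM : IsClosed M)
    (hgph : IsClosed (svGraph K))
    (hfeas : zb ∈ M ∩ svDom K)
    (hsingle : K zb = {lamb})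
    (hisc : InnerSemicompactAt K zb)
    (hicf : InnerCalmStarFuzzyAt K zb)
    (hstat : -gradient f zb ∈ regNormalCone M zb +
      {ξ : EuclideanSpace ℝ (Fin n) |
        (ξ, (0 : EuclideanSpace ℝ (Fin m))) ∈ regNormalConeProd (svGraph K) (zb, lamb)}) :
    -gradient f zb ∈ regNormalCone M zb + regNormalCone (svDom K) zb := by
  obtain ⟨ξ₁, h₁, ξ₂, h₂, hsum⟩ := hstat
  refine ⟨ξ₁, h₁, ξ₂, ?_, hsum⟩
  intro w hw
  rcases eq_or_ne w 0 with rfl | hw0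
  · simp
  have hnw : (0 : ℝ) < ‖w‖ := norm_pos_iff.mpr hw0
  set d : EuclideanSpace ℝ (Fin n) := ‖w‖⁻¹ • w with hd
  have hdmem : d ∈ bouligandTangentCone (svDom K) zb := btc_smul hw (by positivity)
  have hdnorm : ‖d‖ = 1 := by
    rw [hd, norm_smul, norm_inv, norm_norm, inv_mul_cancel₀ hnw.ne']
  obtain ⟨κ, hκ, lb, t, ds, ls, ht0, htl, hdsl, hlsl, hprop⟩ := hicf d hdmem hdnorm
  have hz : Tendsto (fun k => zb + t k • ds k) atTop (𝓝 zb) := by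
    have : Tendsto (fun k => t k • ds k) atTop (𝓝 ((0 : ℝ) • d)) := htl.smul hdsl
    simpa using tendsto_const_nhds.add this
  have hlb : lb = lamb := by
    have hmem : ∀ k, ((zb + t k • ds k, ls k) : _ × _) ∈ svGraph K := fun k => (hprop k).1
    have hlim : Tendsto (fun k => ((zb + t k • ds k, ls k) : _ × _)) atTop (𝓝 (zb, lb)) :=
      hz.prodMk_nhds hlsl
    have h5 : (zb, lb) ∈ svGraph K := hgph.mem_of_tendsto hlim (Eventually.of_forall hmem)
    have h6 : lb ∈ K zb := h5
    rw [hsingle] at h6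
    exact h6
  subst hlb
  set e : ℕ → EuclideanSpace ℝ (Fin m) := fun k => (t k)⁻¹ • (ls k - lb) with he
  obtain ⟨C, hC⟩ := (isBounded_range_of_tendsto ds hdsl).exists_norm_le
  have heb : ∀ k, e k ∈ Metric.closedBall (0 : EuclideanSpace ℝ (Fin m)) (κ * C) := by
    intro k
    rw [Metric.mem_closedBall, dist_zero_right, he]
    have h1 : ‖(t k)⁻¹ • (ls k - lb)‖ = (t k)⁻¹ * ‖ls k - lb‖ := by
      rw [norm_smul, Real.norm_eq_abs, abs_of_pos (inv_pos.mpr (ht0 k))]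
    rw [h1]
    have h2 : ‖ls k - lb‖ ≤ κ * t k * ‖ds k‖ := (hprop k).2
    have h3 : (t k)⁻¹ * ‖ls k - lb‖ ≤ (t k)⁻¹ * (κ * t k * ‖ds k‖) :=
      mul_le_mul_of_nonneg_left h2 (inv_pos.mpr (ht0 k)).le
    have h4 : (t k)⁻¹ * (κ * t k * ‖ds k‖) = κ * ‖ds k‖ := by
      have htk : t k ≠ 0 := (ht0 k).ne'
      field_simp
    have h5 : κ * ‖ds k‖ ≤ κ * C :=
      mul_le_mul_of_nonneg_left (hC (ds k) (Set.mem_range_self k)) hκ.le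
    linarith
  obtain ⟨δ, -, φ, hφ, heφ⟩ := tendsto_subseq_of_bounded Metric.isBounded_closedBall heb
  have htan : ((d, δ) : _ × _) ∈ bouligandTangentCone (svGraph K) (zb, lb) := by
    refine ⟨fun k => t (φ k), fun k => (ds (φ k), e (φ k)), fun k => ht0 _,
      htl.comp hφ.tendsto_atTop, (hdsl.comp hφ.tendsto_atTop).prodMk_nhds heφ, fun k => ?_⟩
    show lb + t (φ k) • e (φ k) ∈ K (zb + t (φ k) • ds (φ k))
    have heq : lb + t (φ k) • e (φ k) = ls (φ k) := by
      rw [he]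
      simp only [smul_smul, mul_inv_cancel₀ (ht0 (φ k)).ne', one_smul]
      abel
    rw [heq]
    exact (hprop (φ k)).1
  have hineq := h₂ (d, δ) htan
  simp only [inner_zero_left] at hineq
  have hdle : ⟪ξ₂, d⟫ ≤ 0 := by linarith
  have hwd : w = ‖w‖ • d := by
    rw [hd, smul_smul, mul_inv_cancel₀ hnw.ne', one_smul]
  rw [hwd, inner_smul_right]
  exact mul_nonpos_of_nonneg_of_nonpos hnw.le hdle
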